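/- Let r ≥ 2 be an integer, q = exp(iπ/r) ∈ ℂ, α ∈ ℂ, and let U_ᾱ be the ℂ-algebra with generators E, F, K, K⁻¹ and relations KK⁻¹ = K⁻¹K = 1, KEK⁻¹ = q²E, KFK⁻¹ = q⁻²F, EF − FE = (K − K⁻¹)/(q − q⁻¹), E^r = 0, F^r = 0, K^r = exp(iπα)·1. Let Ω := FE + (qK + q⁻¹K⁻¹)/(q − q⁻¹)². Assume the family {E^m F^n K^l : 0 ≤ m, n, l ≤ r−1} is a ℂ-basis of U_ᾱ, let η ∈ ℂ, and let μ̃ : U_ᾱ → ℂ be the linear form determined on this basis by μ̃(E^m F^n K^l) = η if (m, n, l) = (r−1, r−1, 0) and 0 otherwise. Then μ̃(Ω^k) = 0 for every 0 ≤ k ≤ r−2, and μ̃(Ω^{r−1}) = η. -/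

import Mathlib

/-- Generators of the quantum group. -/
inductive SL2Gen : Type
  | E | F | K | Kinv

open FreeAlgebra in
/-- Defining relations of `U_ᾱ`: the restricted quantum `sl2` with `K^r = exp(iπα)`. -/
inductive SL2AlphaRel (q : ℂ) (r : ℕ) (α : ℂ) :
    FreeAlgebra ℂ SL2Gen → FreeAlgebra ℂ SL2Gen → Prop
  | K_Kinv : SL2AlphaRel q r α (ι ℂ SL2Gen.K * ι ℂ SL2Gen.Kinv) 1
  | Kinv_K : SL2AlphaRel q r α (ι ℂ SL2Gen.Kinv * ι ℂ SL2Gen.K) 1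
  | K_E : SL2AlphaRel q r α (ι ℂ SL2Gen.K * ι ℂ SL2Gen.E * ι ℂ SL2Gen.Kinv)
      (q ^ 2 • ι ℂ SL2Gen.E)
  | K_F : SL2AlphaRel q r α (ι ℂ SL2Gen.K * ι ℂ SL2Gen.F * ι ℂ SL2Gen.Kinv)
      ((q ^ 2)⁻¹ • ι ℂ SL2Gen.F)
  | E_F : SL2AlphaRel q r α (ι ℂ SL2Gen.E * ι ℂ SL2Gen.F - ι ℂ SL2Gen.F * ι ℂ SL2Gen.E)
      ((q - q⁻¹)⁻¹ • (ι ℂ SL2Gen.K - ι ℂ SL2Gen.Kinv))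
  | E_pow : SL2AlphaRel q r α (ι ℂ SL2Gen.E ^ r) 0
  | F_pow : SL2AlphaRel q r α (ι ℂ SL2Gen.F ^ r) 0
  | K_pow : SL2AlphaRel q r α (ι ℂ SL2Gen.K ^ r)
      (Complex.exp (Real.pi * Complex.I * α) • 1)

/-- The algebra `U_ᾱ`. -/
abbrev UqAlpha (q : ℂ) (r : ℕ) (α : ℂ) : Type := RingQuot (SL2AlphaRel q r α)

namespace UqAlpha

variable (q : ℂ) (r : ℕ) (α : ℂ)

noncomputable def E : UqAlpha q r α :=
  RingQuot.mkAlgHom ℂ (SL2AlphaRel q r α) (FreeAlgebra.ι ℂ SL2Gen.E)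
noncomputable def F : UqAlpha q r α :=
  RingQuot.mkAlgHom ℂ (SL2AlphaRel q r α) (FreeAlgebra.ι ℂ SL2Gen.F)
noncomputable def K : UqAlpha q r α :=
  RingQuot.mkAlgHom ℂ (SL2AlphaRel q r α) (FreeAlgebra.ι ℂ SL2Gen.K)
noncomputable def Kinv : UqAlpha q r α :=
  RingQuot.mkAlgHom ℂ (SL2AlphaRel q r α) (FreeAlgebra.ι ℂ SL2Gen.Kinv)

/-- The Casimir element `Ω = FE + (qK + q⁻¹K⁻¹)/(q - q⁻¹)²`. -/
noncomputable def Ω : UqAlpha q r α :=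
  F q r α * E q r α + ((q - q⁻¹) ^ 2)⁻¹ • (q • K q r α + q⁻¹ • Kinv q r α)

end UqAlpha

/-! The Casimir element `Ω` is central and `EF = Ω - (q⁻¹K + qK⁻¹)/(q - q⁻¹)²`, so
`EᵃFᵃΩ = Eᵃ⁺¹Fᵃ⁺¹ + EᵃFᵃz` with `z ∈ ℂ[K]`. By induction, `Ωᵏ ≡ EᵏFᵏ` modulo the span of the
`EᵃFᵃℂ[K]` with `a < k`. Since `Kˡ` is a multiple of `K^(l mod r)`, `μ` kills all of these as long
as `k ≤ r - 1`, hence `μ(Ωᵏ) = μ(EᵏFᵏ)`, which is `η` for `k = r - 1` and `0` otherwise. -/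

theorem inv_sq_mul_self {𝕜 : Type*} [Field 𝕜] (x : 𝕜) : (x ^ 2)⁻¹ * x = x⁻¹ := by
  rw [sq, inv_mul_eq_div, div_self_mul_self']

namespace UqAlpha

variable {q : ℂ} {r : ℕ} {α : ℂ}

local notation "𝐄" => E q r α
local notation "𝐅" => F q r α
local notation "𝐊" => K q r α
local notation "𝐊⁻¹" => Kinv q r α
local notation "𝛀" => Ω q r α

theorem K_mul_Kinv : 𝐊 * 𝐊⁻¹ = 1 := by
  simpa [K, Kinv] using RingQuot.mkAlgHom_rel ℂ (SL2AlphaRel.K_Kinv (q := q) (r := r) (α := α))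

theorem Kinv_mul_K : 𝐊⁻¹ * 𝐊 = 1 := by
  simpa [K, Kinv] using RingQuot.mkAlgHom_rel ℂ (SL2AlphaRel.Kinv_K (q := q) (r := r) (α := α))

theorem K_mul_E : 𝐊 * 𝐄 = q ^ 2 • (𝐄 * 𝐊) := by
  have h : 𝐊 * 𝐄 * 𝐊⁻¹ = q ^ 2 • 𝐄 := by
    simpa [K, E, Kinv] using RingQuot.mkAlgHom_rel ℂ (SL2AlphaRel.K_E (q := q) (r := r) (α := α))
  rw [← smul_mul_assoc, ← h, mul_assoc, Kinv_mul_K, mul_one]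

theorem K_mul_F : 𝐊 * 𝐅 = (q ^ 2)⁻¹ • (𝐅 * 𝐊) := by
  have h : 𝐊 * 𝐅 * 𝐊⁻¹ = (q ^ 2)⁻¹ • 𝐅 := by
    simpa [K, F, Kinv] using RingQuot.mkAlgHom_rel ℂ (SL2AlphaRel.K_F (q := q) (r := r) (α := α))
  rw [← smul_mul_assoc, ← h, mul_assoc, Kinv_mul_K, mul_one]

theorem Kinv_mul_F (hq : q ≠ 0) : 𝐊⁻¹ * 𝐅 = q ^ 2 • (𝐅 * 𝐊⁻¹) := by
  have h : 𝐊 * (𝐅 * 𝐊⁻¹) = (q ^ 2)⁻¹ • 𝐅 := by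
    simpa [K, F, Kinv, mul_assoc] using
      RingQuot.mkAlgHom_rel ℂ (SL2AlphaRel.K_F (q := q) (r := r) (α := α))
  calc 𝐊⁻¹ * 𝐅 = q ^ 2 • ((q ^ 2)⁻¹ • (𝐊⁻¹ * 𝐅)) := by
        rw [smul_smul, mul_inv_cancel₀ (pow_ne_zero 2 hq), one_smul]
    _ = q ^ 2 • (𝐊⁻¹ * (𝐊 * (𝐅 * 𝐊⁻¹))) := by rw [h, mul_smul_comm]
    _ = q ^ 2 • (𝐅 * 𝐊⁻¹) := by rw [← mul_assoc, Kinv_mul_K, one_mul]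

theorem E_mul_F : 𝐄 * 𝐅 = 𝐅 * 𝐄 + (q - q⁻¹)⁻¹ • (𝐊 - 𝐊⁻¹) := by
  have h : 𝐄 * 𝐅 - 𝐅 * 𝐄 = (q - q⁻¹)⁻¹ • (𝐊 - 𝐊⁻¹) := by
    simpa [E, F, K, Kinv] using RingQuot.mkAlgHom_rel ℂ (SL2AlphaRel.E_F (q := q) (r := r) (α := α))
  rw [← h, add_sub_cancel]

theorem K_pow_r : 𝐊 ^ r = Complex.exp (Real.pi * Complex.I * α) • 1 := by
  simpa [K] using RingQuot.mkAlgHom_rel ℂ (SL2AlphaRel.K_pow (q := q) (r := r) (α := α))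

theorem Kinv_eq_smul_K_pow (hr : r ≠ 0) :
    𝐊⁻¹ = (Complex.exp (Real.pi * Complex.I * α))⁻¹ • 𝐊 ^ (r - 1) := by
  have h : 𝐊 ^ (r - 1) = Complex.exp (Real.pi * Complex.I * α) • 𝐊⁻¹ := by
    rw [← mul_one (𝐊 ^ (r - 1)), ← K_mul_Kinv, ← mul_assoc, ← pow_succ, Nat.sub_add_cancel
      (Nat.one_le_iff_ne_zero.mpr hr), K_pow_r, smul_mul_assoc, one_mul]
  rw [h, inv_smul_smul₀ (Complex.exp_ne_zero _)]

theorem Kinv_mem_adjoin_K (hr : r ≠ 0) : 𝐊⁻¹ ∈ Algebra.adjoin ℂ {𝐊} := by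
  rw [Kinv_eq_smul_K_pow hr]
  exact Subalgebra.smul_mem _ (Subalgebra.pow_mem _ (Algebra.self_mem_adjoin_singleton ℂ _) _) _

theorem K_pow_eq_smul_K_pow_mod (l : ℕ) :
    𝐊 ^ l = Complex.exp (Real.pi * Complex.I * α) ^ (l / r) • 𝐊 ^ (l % r) := by
  conv_lhs => rw [← Nat.div_add_mod l r, pow_add, pow_mul, K_pow_r, smul_pow, one_pow,
    smul_mul_assoc, one_mul]

theorem K_mul_F_pow (n : ℕ) : 𝐊 * 𝐅 ^ n = ((q ^ 2)⁻¹) ^ n • (𝐅 ^ n * 𝐊) := by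
  have h : SemiconjBy 𝐊 𝐅 ((q ^ 2)⁻¹ • 𝐅) := by
    rw [SemiconjBy, K_mul_F, smul_mul_assoc]
  rw [(h.pow_right n).eq, smul_pow, smul_mul_assoc]

theorem Kinv_mul_F_pow (hq : q ≠ 0) (n : ℕ) : 𝐊⁻¹ * 𝐅 ^ n = (q ^ 2) ^ n • (𝐅 ^ n * 𝐊⁻¹) := by
  have h : SemiconjBy 𝐊⁻¹ 𝐅 (q ^ 2 • 𝐅) := by
    rw [SemiconjBy, Kinv_mul_F hq, smul_mul_assoc]
  rw [(h.pow_right n).eq, smul_pow, smul_mul_assoc]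

theorem commute_K_Ω (hq : q ≠ 0) : Commute 𝐊 𝛀 := by
  have hFE : Commute 𝐊 (𝐅 * 𝐄) := by
    rw [Commute, SemiconjBy, ← mul_assoc, K_mul_F, smul_mul_assoc, mul_assoc, K_mul_E,
      mul_smul_comm, smul_smul, inv_mul_cancel₀ (pow_ne_zero 2 hq), one_smul, mul_assoc]
  have hKinv : Commute 𝐊 𝐊⁻¹ := by
    rw [Commute, SemiconjBy, K_mul_Kinv, Kinv_mul_K]
  exact hFE.add_right
    ((((Commute.refl _).smul_right q).add_right (hKinv.smul_right _)).smul_right _)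

theorem commute_Ω_F (hq : q ≠ 0) : Commute 𝛀 𝐅 := by
  have h₁ : q * (q ^ 2)⁻¹ = q⁻¹ := by field_simp
  have h₂ : q⁻¹ * q ^ 2 = q := by field_simp
  rw [Commute, SemiconjBy, Ω, add_mul, mul_assoc, E_mul_F, smul_mul_assoc, add_mul,
    smul_mul_assoc, smul_mul_assoc, K_mul_F, Kinv_mul_F hq, smul_smul q, smul_smul q⁻¹, h₁, h₂]
  simp only [mul_add, mul_sub, mul_smul_comm]
  linear_combination (norm := module) (inv_sq_mul_self (q - q⁻¹)) • (𝐅 * 𝐊⁻¹ - 𝐅 * 𝐊)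

theorem E_mul_F_eq_Ω_sub : 𝐄 * 𝐅 = 𝛀 - ((q - q⁻¹) ^ 2)⁻¹ • (q⁻¹ • 𝐊 + q • 𝐊⁻¹) := by
  rw [E_mul_F, Ω]
  linear_combination (norm := module) (inv_sq_mul_self (q - q⁻¹)) • (𝐊⁻¹ - 𝐊)

theorem E_pow_mul_F_pow_mul_Ω (hq : q ≠ 0) (a : ℕ) :
    𝐄 ^ a * 𝐅 ^ a * 𝛀 = 𝐄 ^ (a + 1) * 𝐅 ^ (a + 1) + 𝐄 ^ a * 𝐅 ^ a *
      (((q - q⁻¹) ^ 2)⁻¹ • ((q⁻¹ * ((q ^ 2)⁻¹) ^ a) • 𝐊 + (q * (q ^ 2) ^ a) • 𝐊⁻¹)) := by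
  calc 𝐄 ^ a * 𝐅 ^ a * 𝛀 = 𝐄 ^ a * (𝛀 * 𝐅 ^ a) := by
        rw [mul_assoc, ((commute_Ω_F hq).pow_right a).eq]
    _ = 𝐄 ^ a * ((𝐄 * 𝐅 + ((q - q⁻¹) ^ 2)⁻¹ • (q⁻¹ • 𝐊 + q • 𝐊⁻¹)) * 𝐅 ^ a) := by
        rw [E_mul_F_eq_Ω_sub, sub_add_cancel]
    _ = _ := by
        rw [add_mul, smul_mul_assoc, add_mul, smul_mul_assoc, smul_mul_assoc, K_mul_F_pow,
          Kinv_mul_F_pow hq, pow_succ 𝐄, pow_succ' 𝐅]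
        simp only [mul_add, mul_smul_comm, smul_smul, smul_add, mul_assoc]

theorem exists_E_pow_mul_F_pow_mul_Ω (hq : q ≠ 0) (hr : r ≠ 0) (a : ℕ) :
    ∃ z ∈ Algebra.adjoin ℂ {𝐊}, 𝐄 ^ a * 𝐅 ^ a * 𝛀 = 𝐄 ^ (a + 1) * 𝐅 ^ (a + 1) + 𝐄 ^ a * 𝐅 ^ a * z :=
  ⟨_, Subalgebra.smul_mem _ (add_mem
    (Subalgebra.smul_mem _ (Algebra.self_mem_adjoin_singleton ℂ _) _)
    (Subalgebra.smul_mem _ (Kinv_mem_adjoin_K hr) _)) _, E_pow_mul_F_pow_mul_Ω hq a⟩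

variable (q r α) in
def diagSpan (k : ℕ) : Submodule ℂ (UqAlpha q r α) :=
  Submodule.span ℂ {x | ∃ a < k, ∃ y ∈ Algebra.adjoin ℂ {𝐊}, x = 𝐄 ^ a * 𝐅 ^ a * y}

theorem E_pow_mul_F_pow_mul_mem_diagSpan {a k : ℕ} (ha : a < k) {y : UqAlpha q r α}
    (hy : y ∈ Algebra.adjoin ℂ {𝐊}) : 𝐄 ^ a * 𝐅 ^ a * y ∈ diagSpan q r α k :=
  Submodule.subset_span ⟨a, ha, y, hy, rfl⟩

theorem diagSpan_mono : Monotone (diagSpan q r α) := fun _ _ hkl =>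
  Submodule.span_mono fun _ ⟨a, ha, y, hy, hx⟩ => ⟨a, ha.trans_le hkl, y, hy, hx⟩

theorem mul_Ω_mem_diagSpan (hq : q ≠ 0) (hr : r ≠ 0) {k : ℕ} {x : UqAlpha q r α}
    (hx : x ∈ diagSpan q r α k) : x * 𝛀 ∈ diagSpan q r α (k + 1) := by
  induction hx using Submodule.span_induction with
  | mem x hx =>
    obtain ⟨a, ha, y, hy, rfl⟩ := hx
    obtain ⟨z, hz, hΩ⟩ := exists_E_pow_mul_F_pow_mul_Ω hq hr a
    have hyΩ : Commute 𝛀 y :=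
      Algebra.commute_of_mem_adjoin_singleton_of_commute hy (commute_K_Ω hq).symm
    rw [mul_assoc, ← hyΩ.eq, ← mul_assoc, hΩ, add_mul, mul_assoc (𝐄 ^ a * 𝐅 ^ a)]
    exact add_mem (E_pow_mul_F_pow_mul_mem_diagSpan (by omega) hy)
      (E_pow_mul_F_pow_mul_mem_diagSpan (by omega) (mul_mem hz hy))
  | zero => simp
  | add x y _ _ hx hy => rw [add_mul]; exact add_mem hx hy
  | smul c x _ hx => rw [smul_mul_assoc]; exact Submodule.smul_mem _ c hx

theorem Ω_pow_sub_mem_diagSpan (hq : q ≠ 0) (hr : r ≠ 0) (k : ℕ) :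
    𝛀 ^ k - 𝐄 ^ k * 𝐅 ^ k ∈ diagSpan q r α k := by
  induction k with
  | zero => simp
  | succ k ih =>
    obtain ⟨z, hz, hΩ⟩ := exists_E_pow_mul_F_pow_mul_Ω hq hr k
    rw [pow_succ, ← sub_add_sub_cancel _ (𝐄 ^ k * 𝐅 ^ k * 𝛀), ← sub_mul, hΩ, add_sub_cancel_left]
    exact add_mem (mul_Ω_mem_diagSpan hq hr ih)
      (E_pow_mul_F_pow_mul_mem_diagSpan (Nat.lt_succ_self k) hz)

theorem diagSpan_le_ker (hr : r ≠ 0) {μ : UqAlpha q r α →ₗ[ℂ] ℂ}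
    (hμ : ∀ a < r - 1, ∀ l < r, μ (𝐄 ^ a * 𝐅 ^ a * 𝐊 ^ l) = 0) :
    diagSpan q r α (r - 1) ≤ LinearMap.ker μ := by
  refine Submodule.span_le.mpr ?_
  rintro _ ⟨a, ha, y, hy, rfl⟩
  have hK : Subalgebra.toSubmodule (Algebra.adjoin ℂ {𝐊}) ≤
      LinearMap.ker (μ ∘ₗ LinearMap.mulLeft ℂ (𝐄 ^ a * 𝐅 ^ a)) := by
    rw [Algebra.adjoin_eq_span, Submodule.span_le]
    rintro _ hl
    obtain ⟨l, rfl⟩ := Submonoid.mem_closure_singleton.mp hl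
    rw [SetLike.mem_coe, LinearMap.mem_ker, LinearMap.comp_apply, LinearMap.mulLeft_apply,
      K_pow_eq_smul_K_pow_mod, mul_smul_comm, map_smul,
      hμ a ha _ (Nat.mod_lt _ (Nat.pos_of_ne_zero hr)), smul_zero]
  exact hK hy

end UqAlpha

open UqAlpha in
theorem symmetrised_integral_casimir_powers_general (r : ℕ) (hr : 2 ≤ r)
    (q : ℂ) (hq : q = Complex.exp (Real.pi * Complex.I / r)) (α : ℂ)
    (η : ℂ) (μ : UqAlpha q r α →ₗ[ℂ] ℂ)
    (hμ : ∀ m n l : Fin r,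
      μ (E q r α ^ (m : ℕ) * F q r α ^ (n : ℕ) * K q r α ^ (l : ℕ))
        = if (m : ℕ) = r - 1 ∧ (n : ℕ) = r - 1 ∧ (l : ℕ) = 0 then η else 0) :
    (∀ k : ℕ, k ≤ r - 2 → μ (Ω q r α ^ k) = 0) ∧ μ (Ω q r α ^ (r - 1)) = η := by
  have hq₀ : q ≠ 0 := hq ▸ Complex.exp_ne_zero _
  have hr₀ : r ≠ 0 := by omega
  have hdiag (k : ℕ) (hk : k < r) :
      μ (E q r α ^ k * F q r α ^ k) = if k = r - 1 then η else 0 := by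
    simpa using hμ ⟨k, hk⟩ ⟨k, hk⟩ ⟨0, by omega⟩
  have hker : diagSpan q r α (r - 1) ≤ LinearMap.ker μ :=
    diagSpan_le_ker hr₀ fun a ha l hl => by
      simpa [ha.ne] using hμ ⟨a, by omega⟩ ⟨a, by omega⟩ ⟨l, hl⟩
  have hΩ (k : ℕ) (hk : k ≤ r - 1) : μ (Ω q r α ^ k) = μ (E q r α ^ k * F q r α ^ k) := by
    have h := hker (diagSpan_mono hk (Ω_pow_sub_mem_diagSpan hq₀ hr₀ k))
    rwa [LinearMap.mem_ker, map_sub, sub_eq_zero] at h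
  refine ⟨fun k hk => ?_, ?_⟩
  · rw [hΩ k (by omega), hdiag k (by omega), if_neg (by omega)]
  · rw [hΩ _ le_rfl, hdiag _ (by omega), if_pos rfl]

open UqAlpha in
theorem symmetrised_integral_casimir_powers (r : ℕ) (hr : 2 ≤ r)
    (q : ℂ) (hq : q = Complex.exp (Real.pi * Complex.I / r)) (α : ℂ)
    (b : Module.Basis (Fin r × Fin r × Fin r) ℂ (UqAlpha q r α))
    (hb : ∀ p : Fin r × Fin r × Fin r,
      b p = E q r α ^ (p.1 : ℕ) * F q r α ^ (p.2.1 : ℕ) * K q r α ^ (p.2.2 : ℕ))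
    (η : ℂ) (μ : UqAlpha q r α →ₗ[ℂ] ℂ)
    (hμ : ∀ m n l : Fin r,
      μ (E q r α ^ (m : ℕ) * F q r α ^ (n : ℕ) * K q r α ^ (l : ℕ))
        = if (m : ℕ) = r - 1 ∧ (n : ℕ) = r - 1 ∧ (l : ℕ) = 0 then η else 0) :
    (∀ k : ℕ, k ≤ r - 2 → μ (Ω q r α ^ k) = 0) ∧ μ (Ω q r α ^ (r - 1)) = η :=
  symmetrised_integral_casimir_powers_general r hr q hq α η μ hμ
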